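/- Let t ≥ 1 and let Δ_i = Finset.Icc (a i) (b i) ⊆ ℤ for i ∈ Fin t be nonempty integer intervals with b 1 ≥ b 2 ≥ ⋯ ≥ b t (right-ordered). Suppose each Δ_i is partitioned as a disjoint union Δ_i = Δ_{i,1} ⊔ ⋯ ⊔ Δ_{i,t} of (possibly empty) consecutive subintervals arranged from top to bottom (i.e. every element of Δ_{i,j} is greater than every element of Δ_{i,j'} whenever j < j'), and that the duality condition Δ_{j,i} = -Δ_{i,j} := { -x : x ∈ Δ_{i,j} } holds for all i, j. Then for every i, exactly one of the pieces Δ_{i,1}, …, Δ_{i,t} is nonempty (namely Δ_{i,j} = Δ_i for a unique j). -/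
import Mathlib


theorem admissible_cosets_only (t : ℕ) (ht : 1 ≤ t) (a b : Fin t → ℤ)
    (hab : ∀ i, a i ≤ b i)
    (hord : ∀ i j : Fin t, i ≤ j → b j ≤ b i)
    (Δ : Fin t → Fin t → Finset ℤ)
    (hpart : ∀ i, Finset.Icc (a i) (b i) = Finset.univ.biUnion (fun j => Δ i j))
    (hdisj : ∀ i, ∀ j j' : Fin t, j ≠ j' → Disjoint (Δ i j) (Δ i j'))
    (hconsec : ∀ i, ∀ j j' : Fin t, j < j' →
      ∀ x ∈ Δ i j, ∀ y ∈ Δ i j', y < x)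
    (hdual : ∀ i j, Δ j i = Finset.image (fun x => -x) (Δ i j)) :
    ∀ i, ∃! j, (Δ i j).Nonempty ∧ Δ i j = Finset.Icc (a i) (b i) := by
  have hsub : ∀ i j : Fin t, Δ i j ⊆ Finset.Icc (a i) (b i) := by
    intro i j
    rw [hpart i]
    exact Finset.subset_biUnion_of_mem _ (Finset.mem_univ j)
  have hneg : ∀ i j : Fin t, ∀ x ∈ Δ i j, -x ∈ Δ j i := by
    intro i j x hx
    rw [hdual i j]
    exact Finset.mem_image_of_mem _ hx
  have key : ∀ n : ℕ, ∀ i : Fin t, i.val = n →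
      ∃ j, (Δ i j).Nonempty ∧ ∀ k, k ≠ j → Δ i k = ∅ := by
    intro n
    induction n using Nat.strong_induction_on with
    | _ n IH =>
      intro i hi
      subst hi
      -- b i lies in some piece of row i
      have hbi : b i ∈ Finset.univ.biUnion (fun j => Δ i j) := by
        rw [← hpart i]; exact Finset.mem_Icc.2 ⟨hab i, le_refl _⟩
      obtain ⟨j', -, hbj'⟩ := Finset.mem_biUnion.1 hbi
      set S := Finset.univ.filter (fun c : Fin t => (Δ i c).Nonempty) with hS
      have hSne : S.Nonempty := ⟨j', Finset.mem_filter.2 ⟨Finset.mem_univ _, ⟨_, hbj'⟩⟩⟩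
      set j := S.min' hSne with hj
      have hjmem : (Δ i j).Nonempty := (Finset.mem_filter.1 (S.min'_mem hSne)).2
      have hjmin : ∀ c, (Δ i c).Nonempty → j ≤ c := fun c hc =>
        S.min'_le c (Finset.mem_filter.2 ⟨Finset.mem_univ _, hc⟩)
      -- b i lies in the topmost nonempty piece Δ i j
      have hbmem : b i ∈ Δ i j := by
        rcases eq_or_lt_of_le (hjmin j' ⟨_, hbj'⟩) with h | h
        · rwa [h]
        · exfalso
          obtain ⟨x, hx⟩ := hjmem
          have h1 := hconsec i j j' h x hx (b i) hbj'
          have h2 := (Finset.mem_Icc.1 (hsub i j hx)).2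
          omega
      -- in row j, all columns with smaller index than i are empty
      have hrowj : ∀ k : Fin t, k.val < i.val → Δ j k = ∅ := by
        intro k hk
        by_contra hne
        obtain ⟨z, hz⟩ := Finset.nonempty_iff_ne_empty.2 hne
        have hkj : -z ∈ Δ k j := hneg j k z hz
        obtain ⟨c, hcne, hcemp⟩ := IH k.val hk k rfl
        have hcj : c = j := by
          by_contra h
          exact absurd (hcemp j (fun hh => h hh.symm))
            (Finset.nonempty_iff_ne_empty.1 ⟨_, hkj⟩)
        subst hcj
        -- b k lies in Δ k c (the unique nonempty piece of row k)
        have hbk : b k ∈ Δ k j := by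
          have hm : b k ∈ Finset.univ.biUnion (fun d => Δ k d) := by
            rw [← hpart k]; exact Finset.mem_Icc.2 ⟨hab k, le_refl _⟩
          obtain ⟨c', -, hc'⟩ := Finset.mem_biUnion.1 hm
          rcases eq_or_ne c' j with h | h
          · rwa [h] at hc'
          · rw [hcemp c' h] at hc'
            exact absurd hc' (Finset.notMem_empty _)
        have h1 : -b k ∈ Δ j k := hneg k j _ hbk
        have hki : k < i := Fin.lt_def.mpr hk
        have h2 := hconsec j k i hki (-b k) h1 (-b i) (hneg i j _ hbmem)
        have h3 := hord k i (le_of_lt hki)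
        omega
      -- b j lies in Δ j i
      have hbji : b j ∈ Δ j i := by
        have hm : b j ∈ Finset.univ.biUnion (fun d => Δ j d) := by
          rw [← hpart j]; exact Finset.mem_Icc.2 ⟨hab j, le_refl _⟩
        obtain ⟨c, -, hc⟩ := Finset.mem_biUnion.1 hm
        rcases lt_trichotomy c i with h | h | h
        · rw [hrowj c (Fin.lt_def.mp h)] at hc
          exact absurd hc (Finset.notMem_empty _)
        · rwa [h] at hc
        · exfalso
          have h1 := hconsec j i c h (-b i) (hneg i j _ hbmem) (b j) hc
          have h2 := (Finset.mem_Icc.1 (hsub j i (hneg i j _ hbmem))).2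
          omega
      have hnbj : -b j ∈ Δ i j := hneg j i _ hbji
      refine ⟨j, hjmem, ?_⟩
      intro k hk
      by_contra hne
      obtain ⟨y, hy⟩ := Finset.nonempty_iff_ne_empty.2 hne
      have hjk : j < k := lt_of_le_of_ne (hjmin k ⟨_, hy⟩) (Ne.symm hk)
      have h1 := hconsec i j k hjk (-b j) hnbj y hy
      have h2 := (Finset.mem_Icc.1 (hsub k i (hneg i k _ hy))).2
      have h3 := hord j k (le_of_lt hjk)
      omega
  intro i
  obtain ⟨j, hjne, hjempty⟩ := key i.val i rfl
  have hfull : Δ i j = Finset.Icc (a i) (b i) := by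
    apply Finset.Subset.antisymm (hsub i j)
    intro x hx
    rw [hpart i] at hx
    obtain ⟨c, -, hc⟩ := Finset.mem_biUnion.1 hx
    rcases eq_or_ne c j with h | h
    · rwa [h] at hc
    · rw [hjempty c h] at hc
      exact absurd hc (Finset.notMem_empty _)
  refine ⟨j, ⟨hjne, hfull⟩, ?_⟩
  rintro j' ⟨hj'ne, -⟩
  by_contra h
  rw [hjempty j' h] at hj'ne
  exact absurd hj'ne Finset.not_nonempty_empty
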